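/- arXiv:2504.06386 — 3 statements merged into one kernel-verified Lean document; each statement's English description precedes it below -/
import Mathlib

section
/- Let ν be a probability measure on ℝ, let N be a positive integer, and let ε ∈ (0,1). Then the N-fold product measure ν^{⊗N} of the set {ω ∈ ℝ^N : ν({x ∈ ℝ : x < minᵢ ωᵢ}) > ε} is at most (1 − ε)^N. -/
/-!
The set `A = {r | ε < ν (-∞, r)}` is an upper set, so `ω` is bad exactly when every coordinate
lies in `A`, and the bad event has product measure `ν(A)^N`. Since `A` is `[s, ∞)` or `(s, ∞)`
with `s = inf A`, its complement `(-∞, s)` or `(-∞, s]` has measure at least `ε` (in the second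
case by continuity of `r ↦ ν (-∞, r)` from above at `s`), so `ν(A) ≤ 1 - ε`.
-/

open MeasureTheory Set Filter Topology
open scoped ENNReal

theorem biInter_gt_Iio_eq_Iic (s : ℝ) : ⋂ r > s, Iio r = Iic s := by
  ext x
  simp only [mem_iInter, mem_Iio, mem_Iic]
  exact ⟨fun h => le_of_forall_gt fun r hr => h r hr, fun hx r hr => hx.trans_lt hr⟩

theorem le_measure_Iic_of_forall_gt_lt_measure_Iio (ν : Measure ℝ) [IsFiniteMeasure ν] {e : ℝ≥0∞} {s : ℝ}
    (h : ∀ r > s, e < ν (Iio r)) : e ≤ ν (Iic s) := by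
  have hlim : Tendsto (fun r => ν (Iio r)) (𝓝[>] s) (𝓝 (ν (Iic s))) := by
    rw [← biInter_gt_Iio_eq_Iic]
    exact tendsto_measure_biInter_gt (fun r _ => measurableSet_Iio.nullMeasurableSet)
      (fun _ _ _ hij => Iio_subset_Iio hij) ⟨s + 1, by linarith, measure_ne_top ν _⟩
  exact ge_of_tendsto hlim (eventually_nhdsWithin_of_forall fun r hr => (h r hr).le)

theorem measure_setOf_lt_measure_Iio_le (ν : Measure ℝ) [IsProbabilityMeasure ν] (e : ℝ≥0∞) :
    ν {r | e < ν (Iio r)} ≤ 1 - e := by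
  set A := {r | e < ν (Iio r)}
  have hA : IsUpperSet A := fun a b hab ha => ha.trans_le (measure_mono (Iio_subset_Iio hab))
  rcases A.eq_empty_or_nonempty with hempty | hne
  · simp [hempty]
  by_cases hbdd : BddBelow A
  swap
  · have he : e = 0 := by
      have hlim := tendsto_measure_iInter_atBot (μ := ν)
        (fun r => measurableSet_Iio.nullMeasurableSet) monotone_Iio ⟨0, measure_ne_top ν _⟩
      rw [iInter_Iio_of_not_bddBelow_range (by simp), measure_empty] at hlim
      refine nonpos_iff_eq_zero.1 <| ge_of_tendsto' hlim fun r => ?_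
      obtain ⟨a, ha, har⟩ := not_bddBelow_iff.1 hbdd r
      exact (hA har.le ha).le
    simpa [he] using prob_le_one
  set s := sInf A
  by_cases hs : s ∈ A
  · calc ν A ≤ ν (Ici s) := measure_mono fun r hr => csInf_le hbdd hr
      _ = 1 - ν (Iio s) := by rw [← compl_Iio, prob_compl_eq_one_sub measurableSet_Iio]
      _ ≤ 1 - e := tsub_le_tsub_left hs.le 1
  · have hIic : e ≤ ν (Iic s) := le_measure_Iic_of_forall_gt_lt_measure_Iio ν fun r hr => by
      obtain ⟨a, ha, har⟩ := (csInf_lt_iff hbdd hne).1 hr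
      exact hA har.le ha
    calc ν A ≤ ν (Ioi s) := measure_mono fun r hr =>
          (csInf_le hbdd hr).lt_of_ne (ne_of_mem_of_not_mem hr hs).symm
      _ = 1 - ν (Iic s) := by rw [← compl_Iic, prob_compl_eq_one_sub measurableSet_Iic]
      _ ≤ 1 - e := tsub_le_tsub_left hIic 1

theorem stmt_1_general (ν : Measure ℝ) [IsProbabilityMeasure ν] (N : ℕ)
    (ε : ℝ) (hε : ε ∈ Set.Ioo (0 : ℝ) 1) :
    (Measure.pi fun _ : Fin N => ν)
      {ω : Fin N → ℝ | ENNReal.ofReal ε < ν {x : ℝ | ∀ i, x < ω i}}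
      ≤ ENNReal.ofReal ((1 - ε) ^ N) := by
  set A := {r | ENNReal.ofReal ε < ν (Iio r)}
  have hbad : {ω : Fin N → ℝ | ENNReal.ofReal ε < ν {x : ℝ | ∀ i, x < ω i}} ⊆
      univ.pi fun _ => A :=
    fun ω hω i _ => hω.trans_le (measure_mono fun x hx => hx i)
  calc _ ≤ Measure.pi (fun _ : Fin N => ν) (univ.pi fun _ => A) := measure_mono hbad
    _ = ν A ^ N := by simp [Measure.pi_pi]
    _ ≤ (1 - ENNReal.ofReal ε) ^ N := by gcongr; exact measure_setOf_lt_measure_Iio_le ν _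
    _ = ENNReal.ofReal ((1 - ε) ^ N) := by
      rw [ENNReal.ofReal_pow (by linarith [hε.2]), ENNReal.ofReal_sub _ hε.1.le,
        ENNReal.ofReal_one]

/-- One-dimensional scenario-optimization bound: the product-measure probability that the
violation probability `ν((-∞, minᵢ ωᵢ))` of the optimal scenario solution exceeds `ε`
is at most `(1 - ε) ^ N`.  (Note `x < minᵢ ωᵢ ↔ ∀ i, x < ωᵢ`.) -/
theorem stmt_1 (ν : Measure ℝ) [IsProbabilityMeasure ν] (N : ℕ) (hN : 0 < N)
    (ε : ℝ) (hε : ε ∈ Set.Ioo (0 : ℝ) 1) :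
    (Measure.pi fun _ : Fin N => ν)
      {ω : Fin N → ℝ | ENNReal.ofReal ε < ν {x : ℝ | ∀ i, x < ω i}}
      ≤ ENNReal.ofReal ((1 - ε) ^ N) :=
  stmt_1_general ν N ε hε
end

section
/- Let n be a positive integer, let μ_p, μ_b ∈ ℝⁿ, and let σ_p, σ_b ∈ ℝⁿ with 0 < σ_{p,i} < σ_{b,i} for all i. Then for every a ∈ ℝⁿ, φ(a; μ_p, σ_p) / φ(a; μ_b, σ_b) ≤ ∏_{i=1}^n ((σ_{b,i}/σ_{p,i}) · exp((1/2) · (μ_{p,i} − μ_{b,i})²/(σ_{b,i}² − σ_{p,i}²))), with equality at the point a* ∈ ℝⁿ given by a*_i = (σ_{b,i}² μ_{p,i} − σ_{p,i}² μ_{b,i})/(σ_{b,i}² − σ_{p,i}²); hence the supremum over a ∈ ℝⁿ of the ratio equals ∏_{i=1}^n (σ_{b,i}/σ_{p,i}) · exp((1/2) Σ_{i=1}^n (μ_{p,i} − μ_{b,i})²/(σ_{b,i}² − σ_{p,i}²)). -/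
open scoped Real

/-- Diagonal Gaussian density on `ℝⁿ` with means `μ` and standard deviations `σ`. -/
noncomputable def gaussDensity {n : ℕ} (μ σ : Fin n → ℝ) (a : Fin n → ℝ) : ℝ :=
  ∏ i, (Real.sqrt (2 * π))⁻¹ * (σ i)⁻¹ * Real.exp (-((a i - μ i) ^ 2 / (2 * (σ i) ^ 2)))

lemma factor_eq (s t A B : ℝ) (hs : s ≠ 0) (ht : t ≠ 0) :
    ((Real.sqrt (2 * π))⁻¹ * s⁻¹ * Real.exp A) / ((Real.sqrt (2 * π))⁻¹ * t⁻¹ * Real.exp B)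
      = (t / s) * Real.exp (A - B) := by
  have h2π : Real.sqrt (2 * π) ≠ 0 := ne_of_gt (Real.sqrt_pos.mpr (by positivity))
  rw [Real.exp_sub]
  field_simp

lemma key_le (s t m m' x : ℝ) (hs : 0 < s) (hst : s < t) :
    -((x - m) ^ 2 / (2 * s ^ 2)) - -((x - m') ^ 2 / (2 * t ^ 2))
      ≤ (1 / 2) * ((m - m') ^ 2 / (t ^ 2 - s ^ 2)) := by
  have ht : 0 < t := hs.trans hst
  have h1 : 0 < t ^ 2 - s ^ 2 := by nlinarith
  have key : (1 / 2) * ((m - m') ^ 2 / (t ^ 2 - s ^ 2))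
      - (-((x - m) ^ 2 / (2 * s ^ 2)) - -((x - m') ^ 2 / (2 * t ^ 2)))
      = ((t ^ 2 - s ^ 2) * x - (t ^ 2 * m - s ^ 2 * m')) ^ 2
          / (2 * s ^ 2 * t ^ 2 * (t ^ 2 - s ^ 2)) := by
    field_simp
    ring
  nlinarith [div_nonneg (sq_nonneg ((t ^ 2 - s ^ 2) * x - (t ^ 2 * m - s ^ 2 * m')))
    (by positivity : (0:ℝ) ≤ 2 * s ^ 2 * t ^ 2 * (t ^ 2 - s ^ 2))]

lemma key_eq (s t m m' : ℝ) (hs : 0 < s) (hst : s < t) :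
    -(((t ^ 2 * m - s ^ 2 * m') / (t ^ 2 - s ^ 2) - m) ^ 2 / (2 * s ^ 2))
      - -(((t ^ 2 * m - s ^ 2 * m') / (t ^ 2 - s ^ 2) - m') ^ 2 / (2 * t ^ 2))
      = (1 / 2) * ((m - m') ^ 2 / (t ^ 2 - s ^ 2)) := by
  have ht : 0 < t := hs.trans hst
  have h1 : t ^ 2 - s ^ 2 ≠ 0 := by nlinarith
  field_simp
  ring

/-- Core of Theorem 5: in the regime `σ_{p,i} < σ_{b,i}`, the ratio of diagonal Gaussian
densities is bounded by the stated closed form, with equality at the stationary point `a*`;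
hence the supremum of the ratio over `ℝⁿ` equals that closed form. -/
theorem stmt_11 (n : ℕ) (hn : 0 < n) (μp μb σp σb : Fin n → ℝ)
    (hσp : ∀ i, 0 < σp i) (hσpb : ∀ i, σp i < σb i) :
    (∀ a : Fin n → ℝ,
      gaussDensity μp σp a / gaussDensity μb σb a
        ≤ ∏ i, (σb i / σp i) *
            Real.exp ((1 / 2) * ((μp i - μb i) ^ 2 / ((σb i) ^ 2 - (σp i) ^ 2)))) ∧
    (gaussDensity μp σp
          (fun i => ((σb i) ^ 2 * μp i - (σp i) ^ 2 * μb i) / ((σb i) ^ 2 - (σp i) ^ 2))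
        / gaussDensity μb σb
          (fun i => ((σb i) ^ 2 * μp i - (σp i) ^ 2 * μb i) / ((σb i) ^ 2 - (σp i) ^ 2))
      = ∏ i, (σb i / σp i) *
          Real.exp ((1 / 2) * ((μp i - μb i) ^ 2 / ((σb i) ^ 2 - (σp i) ^ 2)))) ∧
    (⨆ a : Fin n → ℝ, gaussDensity μp σp a / gaussDensity μb σb a)
      = (∏ i, σb i / σp i) *
          Real.exp ((1 / 2) * ∑ i, (μp i - μb i) ^ 2 / ((σb i) ^ 2 - (σp i) ^ 2)) := by
  have hσb : ∀ i, 0 < σb i := fun i => (hσp i).trans (hσpb i)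
  have ratio_eq : ∀ a : Fin n → ℝ,
      gaussDensity μp σp a / gaussDensity μb σb a
        = ∏ i, (σb i / σp i) *
            Real.exp (-((a i - μp i) ^ 2 / (2 * (σp i) ^ 2))
              - -((a i - μb i) ^ 2 / (2 * (σb i) ^ 2))) := by
    intro a
    unfold gaussDensity
    rw [← Finset.prod_div_distrib]
    exact Finset.prod_congr rfl fun i _ =>
      factor_eq (σp i) (σb i) _ _ (hσp i).ne' (hσb i).ne'
  have h1 : ∀ a : Fin n → ℝ,
      gaussDensity μp σp a / gaussDensity μb σb a
        ≤ ∏ i, (σb i / σp i) *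
            Real.exp ((1 / 2) * ((μp i - μb i) ^ 2 / ((σb i) ^ 2 - (σp i) ^ 2))) := by
    intro a
    rw [ratio_eq a]
    refine Finset.prod_le_prod (fun i _ => mul_nonneg (div_pos (hσb i) (hσp i)).le (Real.exp_nonneg _)) (fun i _ => ?_)
    refine mul_le_mul_of_nonneg_left (Real.exp_le_exp.mpr ?_) (div_pos (hσb i) (hσp i)).le
    exact key_le (σp i) (σb i) (μp i) (μb i) (a i) (hσp i) (hσpb i)
  have h2 : gaussDensity μp σp
          (fun i => ((σb i) ^ 2 * μp i - (σp i) ^ 2 * μb i) / ((σb i) ^ 2 - (σp i) ^ 2))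
        / gaussDensity μb σb
          (fun i => ((σb i) ^ 2 * μp i - (σp i) ^ 2 * μb i) / ((σb i) ^ 2 - (σp i) ^ 2))
      = ∏ i, (σb i / σp i) *
          Real.exp ((1 / 2) * ((μp i - μb i) ^ 2 / ((σb i) ^ 2 - (σp i) ^ 2))) := by
    rw [ratio_eq]
    exact Finset.prod_congr rfl fun i _ => by
      rw [key_eq (σp i) (σb i) (μp i) (μb i) (hσp i) (hσpb i)]
  have h3 : (∏ i, (σb i / σp i) *
          Real.exp ((1 / 2) * ((μp i - μb i) ^ 2 / ((σb i) ^ 2 - (σp i) ^ 2))))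
      = (∏ i, σb i / σp i) *
          Real.exp ((1 / 2) * ∑ i, (μp i - μb i) ^ 2 / ((σb i) ^ 2 - (σp i) ^ 2)) := by
    rw [Finset.prod_mul_distrib, ← Real.exp_sum, Finset.mul_sum]
  refine ⟨h1, h2, ?_⟩
  rw [← h3]
  apply le_antisymm
  · exact ciSup_le h1
  · exact le_ciSup_of_le ⟨_, Set.forall_mem_range.mpr h1⟩ _ h2.ge
end

section
/- Let n be a positive integer, let μ_b ∈ ℝⁿ, and let σ_b ∈ ℝⁿ with σ_{b,i} > 0 for all i. Then the function g(μ, σ) = −Σ_{i=1}^n ln σ_i + (1/2) Σ_{i=1}^n (μ_i − μ_{b,i})²/(σ_{b,i}² − σ_i²) is convex on the convex set {(μ, σ) ∈ ℝⁿ × ℝⁿ : 0 < σ_i < σ_{b,i} for all i}. -/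
open Real Finset

lemma quad_core (u1 u2 v1 v2 D a b : ℝ) (hv1 : 0 < v1) (hv2 : 0 < v2)
    (ha : 0 ≤ a) (hb : 0 ≤ b) (hab : a + b = 1)
    (hDge : a * v1 + b * v2 ≤ D) :
    (a * u1 + b * u2) ^ 2 / D ≤ a * (u1 ^ 2 / v1) + b * (u2 ^ 2 / v2) := by
  have hVpos : 0 < a * v1 + b * v2 := by
    rcases eq_or_lt_of_le ha with h | h
    · have hb1 : b = 1 := by linarith
      simpa [← h, hb1] using hv2
    · have h1 : 0 < a * v1 := mul_pos h hv1
      have h2 : 0 ≤ b * v2 := mul_nonneg hb hv2.le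
      linarith
  have hD : 0 < D := lt_of_lt_of_le hVpos hDge
  rw [div_le_iff₀ hD]
  set W := a * (u1 ^ 2 / v1) + b * (u2 ^ 2 / v2) with hWd
  have hWn : 0 ≤ W :=
    add_nonneg (mul_nonneg ha (div_nonneg (sq_nonneg _) hv1.le))
      (mul_nonneg hb (div_nonneg (sq_nonneg _) hv2.le))
  have hW : W * (v1 * v2) = a * (u1 ^ 2 * v2) + b * (u2 ^ 2 * v1) := by
    rw [hWd]; field_simp
  have key : (a * u1 + b * u2) ^ 2 * (v1 * v2) ≤
      ((a * v1 + b * v2) * (a * (u1 ^ 2 * v2) + b * (u2 ^ 2 * v1))) := by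
    nlinarith [mul_nonneg (mul_nonneg ha hb) (sq_nonneg (u1 * v2 - u2 * v1))]
  have key2 : (a * u1 + b * u2) ^ 2 * (v1 * v2) ≤ ((a * v1 + b * v2) * W) * (v1 * v2) := by
    calc (a * u1 + b * u2) ^ 2 * (v1 * v2)
        ≤ (a * v1 + b * v2) * (a * (u1 ^ 2 * v2) + b * (u2 ^ 2 * v1)) := key
      _ = ((a * v1 + b * v2) * W) * (v1 * v2) := by rw [mul_assoc, hW]
  have h1 : (a * u1 + b * u2) ^ 2 ≤ (a * v1 + b * v2) * W :=
    le_of_mul_le_mul_right key2 (mul_pos hv1 hv2)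
  nlinarith [mul_nonneg hWn (sub_nonneg.2 hDge)]

lemma quad_aux (c σ p1 p2 s1 s2 a b : ℝ) (hs1 : 0 < s1) (hs1' : s1 < σ)
    (hs2 : 0 < s2) (hs2' : s2 < σ) (ha : 0 ≤ a) (hb : 0 ≤ b) (hab : a + b = 1) :
    (a * p1 + b * p2 - c) ^ 2 / (σ ^ 2 - (a * s1 + b * s2) ^ 2) ≤
      a * ((p1 - c) ^ 2 / (σ ^ 2 - s1 ^ 2)) + b * ((p2 - c) ^ 2 / (σ ^ 2 - s2 ^ 2)) := by
  have hv1 : 0 < σ ^ 2 - s1 ^ 2 := by nlinarith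
  have hv2 : 0 < σ ^ 2 - s2 ^ 2 := by nlinarith
  have hmix : a * p1 + b * p2 - c = a * (p1 - c) + b * (p2 - c) := by
    linear_combination c * hab
  have hb' : b = 1 - a := by linarith
  have hDge : a * (σ ^ 2 - s1 ^ 2) + b * (σ ^ 2 - s2 ^ 2) ≤
      σ ^ 2 - (a * s1 + b * s2) ^ 2 := by
    subst hb'
    nlinarith [mul_nonneg (mul_nonneg ha (by linarith : (0:ℝ) ≤ 1 - a)) (sq_nonneg (s1 - s2))]
  rw [hmix]
  exact quad_core (p1 - c) (p2 - c) _ _ _ a b hv1 hv2 ha hb hab hDge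

/-- Convexity of the log maximum-policy-ratio constraint function of the policy-projection
problem on the domain `0 < σᵢ < σ_{b,i}` (footnote to Theorem 5). -/
theorem stmt_14 (n : ℕ) (hn : 0 < n) (μb σb : Fin n → ℝ) (hσb : ∀ i, 0 < σb i) :
    ConvexOn ℝ {p : (Fin n → ℝ) × (Fin n → ℝ) | ∀ i, 0 < p.2 i ∧ p.2 i < σb i}
      (fun p => -(∑ i, Real.log (p.2 i))
        + (1 / 2) * ∑ i, (p.1 i - μb i) ^ 2 / ((σb i) ^ 2 - (p.2 i) ^ 2)) := by
  constructor
  · intro x hx y hy a b ha hb hab i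
    obtain ⟨hx1, hx2⟩ := hx i
    obtain ⟨hy1, hy2⟩ := hy i
    have hv : (a • x + b • y).2 i = a * x.2 i + b * y.2 i := rfl
    rw [hv]
    rcases eq_or_lt_of_le ha with h | h
    · have hb1 : b = 1 := by linarith
      constructor
      · simp [← h, hb1]; exact hy1
      · simp [← h, hb1]; exact hy2
    · constructor
      · nlinarith [mul_nonneg hb hy1.le, mul_pos h hx1]
      · nlinarith [mul_le_mul_of_nonneg_left hy2.le hb,
          mul_lt_mul_of_pos_left hx2 h]
  · intro x hx y hy a b ha hb hab
    simp only [Set.mem_setOf_eq] at hx hy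
    have hmix1 : ∀ i, (a • x + b • y).1 i = a * x.1 i + b * y.1 i := fun i => rfl
    have hmix2 : ∀ i, (a • x + b • y).2 i = a * x.2 i + b * y.2 i := fun i => rfl
    simp only [hmix1, hmix2, smul_eq_mul]
    have hlog : ∀ i ∈ Finset.univ (α := Fin n),
        a * Real.log (x.2 i) + b * Real.log (y.2 i) ≤ Real.log (a * x.2 i + b * y.2 i) := by
      intro i _
      have := strictConcaveOn_log_Ioi.concaveOn.2 (Set.mem_Ioi.2 (hx i).1)
        (Set.mem_Ioi.2 (hy i).1) ha hb hab
      simpa using this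
    have hq : ∀ i ∈ Finset.univ (α := Fin n),
        (a * x.1 i + b * y.1 i - μb i) ^ 2 / ((σb i) ^ 2 - (a * x.2 i + b * y.2 i) ^ 2) ≤
          a * ((x.1 i - μb i) ^ 2 / ((σb i) ^ 2 - (x.2 i) ^ 2)) +
          b * ((y.1 i - μb i) ^ 2 / ((σb i) ^ 2 - (y.2 i) ^ 2)) := by
      intro i _
      exact quad_aux (μb i) (σb i) (x.1 i) (y.1 i) (x.2 i) (y.2 i) a b
        (hx i).1 (hx i).2 (hy i).1 (hy i).2 ha hb hab
    have A := Finset.sum_le_sum hlog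
    have B := Finset.sum_le_sum hq
    simp only [Finset.sum_add_distrib, ← Finset.mul_sum] at A B
    linarith
end
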